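/- arXiv:1507.07209 — 6 statements merged into one kernel-verified Lean document; each statement's English description precedes it below -/
import Mathlib

section
/- Define the MDC score l(T,S) of a gene tree T with respect to a species tree S on the same leaf set X as the sum over all nontrivial clusters C of S of (k_T(C) - 1), where k_T(C) is the number of maximal clusters of T contained in C. Then for any rooted binary tree S on X, l(S,S) = 0, and conversely if l(T,S) = 0 then T = S. -/
open scoped Classical

/-- A rooted binary phylogenetic tree on the leaf set `L ⊆ X`, encoded (as usual,
and as in the paper) by its set of clusters: a binary hierarchy on `L` containing
`L` and all singletons. -/
structure PTree (X : Type*) [DecidableEq X] (L : Finset X) where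
  clusters : Finset (Finset X)
  subset_leaves : ∀ C ∈ clusters, C ⊆ L
  cluster_nonempty : ∀ C ∈ clusters, C.Nonempty
  leaves_mem : L ∈ clusters
  singleton_mem : ∀ x ∈ L, ({x} : Finset X) ∈ clusters
  hierarchy : ∀ C ∈ clusters, ∀ D ∈ clusters, C ⊆ D ∨ D ⊆ C ∨ Disjoint C D
  binary : ∀ C ∈ clusters, 1 < C.card →
    ∃ A ∈ clusters, ∃ B ∈ clusters, Disjoint A B ∧ A ∪ B = C

variable {X : Type*} [DecidableEq X]

/-- The maximal members of the cluster family `Tcl` contained in `C`. -/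
noncomputable def maxClustersIn (Tcl : Finset (Finset X)) (C : Finset X) :
    Finset (Finset X) :=
  Tcl.filter (fun D => D ⊆ C ∧ ∀ D' ∈ Tcl, D ⊂ D' → ¬ D' ⊆ C)

/-- `k_T(C)`: the number of maximal clusters of `T` contained in `C`. -/
noncomputable def kOf (Tcl : Finset (Finset X)) (C : Finset X) : ℕ :=
  (maxClustersIn Tcl C).card

/-- MDC score computed from cluster families: the sum over nontrivial clusters `C`
of the species tree (clusters other than the leaf set `L` and singletons) of
`k_T(C) - 1` (Nakhleh et al.'s formula). -/
noncomputable def mdcOfClusters (Tcl Scl : Finset (Finset X)) (L : Finset X) : ℕ :=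
  ∑ C ∈ Scl.filter (fun C => C ≠ L ∧ C.card ≠ 1), (kOf Tcl C - 1)

/-- The MDC score `l(T,S)` of a gene tree `T` with respect to a species tree `S`. -/
noncomputable def mdc {L : Finset X} (T S : PTree X L) : ℕ :=
  mdcOfClusters T.clusters S.clusters L

/-- The cluster set of the restriction `T|_Y` of `T` to the leaf set `Y`:
the nonempty intersections of clusters of `T` with `Y`. -/
noncomputable def restrictClusters {L : Finset X} (T : PTree X L) (Y : Finset X) :
    Finset (Finset X) :=
  (T.clusters.image (· ∩ Y)).filter (fun C => C.Nonempty)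

/-- The full cluster set of a rooted binary tree on leaf set `{0,1,2,3} = Fin 4`
with nontrivial clusters `a` and `b`. -/
noncomputable def cl4 (a b : Finset (Fin 4)) : Finset (Finset (Fin 4)) :=
  {Finset.univ, {0}, {1}, {2}, {3}, a, b}


/-
If `C` is itself a cluster of `T`, it is the only maximal cluster of `T` inside `C`,
so every term of `l(S,S)` vanishes. Conversely, if `l(T,S) = 0` then each nontrivial cluster `C`
of `S` contains exactly one maximal cluster of `T`; as every leaf of `C` lies in some maximal
cluster (its singleton is a cluster), that cluster is all of `C`, so `C` is a cluster of `T`.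
Hence the clusters of `S` are clusters of `T`, and since a rooted binary tree on `n` leaves
has exactly `2n - 1` clusters, the two cluster sets coincide.
-/

section MaximalClusters

variable {Tcl : Finset (Finset X)} {C : Finset X}

lemma maxClustersIn_of_mem (hC : C ∈ Tcl) : maxClustersIn Tcl C = {C} := by
  ext D
  simp only [maxClustersIn, Finset.mem_filter, Finset.mem_singleton]
  constructor
  · rintro ⟨-, hDC, hmax⟩
    by_contra hne
    exact hmax C hC (lt_of_le_of_ne hDC hne) subset_rfl
  · rintro rfl
    exact ⟨hC, subset_rfl, fun D' _ hlt hle => (lt_of_lt_of_le hlt hle).false⟩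

lemma kOf_of_mem (hC : C ∈ Tcl) : kOf Tcl C = 1 := by
  rw [kOf, maxClustersIn_of_mem hC, Finset.card_singleton]

lemma exists_mem_maxClustersIn_superset {E : Finset X} (hE : E ∈ Tcl) (hEC : E ⊆ C) :
    ∃ D ∈ maxClustersIn Tcl C, E ⊆ D := by
  obtain ⟨D, hED, hD⟩ := (Tcl.filter (· ⊆ C)).exists_le_maximal (Finset.mem_filter.2 ⟨hE, hEC⟩)
  obtain ⟨hDT, hDC⟩ := Finset.mem_filter.1 hD.prop
  refine ⟨D, Finset.mem_filter.2 ⟨hDT, hDC, fun D' hD' hlt hD'C => ?_⟩, hED⟩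
  exact hlt.not_ge (hD.le_of_ge (Finset.mem_filter.2 ⟨hD', hD'C⟩) hlt.le)

lemma mem_of_kOf_le_one (hsingleton : ∀ x ∈ C, {x} ∈ Tcl) (hC : C.Nonempty)
    (hk : kOf Tcl C ≤ 1) : C ∈ Tcl := by
  have cover : ∀ x ∈ C, ∃ D ∈ maxClustersIn Tcl C, x ∈ D := fun x hx => by
    simpa using exists_mem_maxClustersIn_superset (hsingleton x hx) (by simpa using hx)
  obtain ⟨x, hx⟩ := hC
  obtain ⟨D, hD, -⟩ := cover x hx
  obtain ⟨hDT, hDC, -⟩ := Finset.mem_filter.1 hD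
  suffices C ⊆ D from Finset.Subset.antisymm this hDC ▸ hDT
  intro y hy
  obtain ⟨E, hE, hyE⟩ := cover y hy
  rwa [Finset.card_le_one.1 hk E hE D hD] at hyE

end MaximalClusters

namespace PTree

variable {L : Finset X} (T : PTree X L)

lemma ext_clusters {S : PTree X L} (h : T.clusters = S.clusters) : T = S := by
  cases T; cases S; cases h; rfl

lemma subset_or_subset_of_ssubset_union {A B D : Finset X} (hA : A ∈ T.clusters)
    (hB : B ∈ T.clusters) (hD : D ∈ T.clusters) (hDAB : D ⊂ A ∪ B) : D ⊆ A ∨ D ⊆ B := by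
  rcases T.hierarchy D hD A hA with hDA | hAD | hDA
  · exact .inl hDA
  · rcases T.hierarchy D hD B hB with hDB | hBD | hDB
    · exact .inr hDB
    · exact absurd (Finset.union_subset hAD hBD) hDAB.not_superset
    · exact .inl (hDB.left_le_of_le_sup_right hDAB.subset)
  · exact .inr (hDA.left_le_of_le_sup_left hDAB.subset)

lemma filter_subset_union_eq {A B : Finset X} (hA : A ∈ T.clusters) (hB : B ∈ T.clusters)
    (hAB : A ∪ B ∈ T.clusters) :
    T.clusters.filter (· ⊆ A ∪ B) =
      insert (A ∪ B) (T.clusters.filter (· ⊆ A) ∪ T.clusters.filter (· ⊆ B)) := by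
  ext D
  simp only [Finset.mem_filter, Finset.mem_insert, Finset.mem_union]
  constructor
  · rintro ⟨hD, hDAB⟩
    rcases eq_or_ssubset_of_subset hDAB with rfl | hlt
    · exact .inl rfl
    · exact .inr ((T.subset_or_subset_of_ssubset_union hA hB hD hlt).imp (⟨hD, ·⟩) (⟨hD, ·⟩))
  · rintro (rfl | ⟨hD, hDA⟩ | ⟨hD, hDB⟩)
    · exact ⟨hAB, subset_rfl⟩
    · exact ⟨hD, hDA.trans Finset.subset_union_left⟩
    · exact ⟨hD, hDB.trans Finset.subset_union_right⟩

lemma card_filter_subset {C : Finset X} (hC : C ∈ T.clusters) :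
    (T.clusters.filter (· ⊆ C)).card = 2 * C.card - 1 := by
  induction C using Finset.strongInduction with
  | H C ih =>
  rcases (T.cluster_nonempty C hC).exists_eq_singleton_or_nontrivial with ⟨x, rfl⟩ | hnt
  · have : T.clusters.filter (· ⊆ {x}) = {{x}} := by
      ext D
      simp only [Finset.mem_filter, Finset.mem_singleton, Finset.subset_singleton_iff]
      constructor
      · rintro ⟨hD, rfl | rfl⟩
        · exact absurd (T.cluster_nonempty _ hD) Finset.not_nonempty_empty
        · rfl
      · rintro rfl
        exact ⟨hC, .inr rfl⟩
    rw [this, Finset.card_singleton, Finset.card_singleton]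
  obtain ⟨A, hA, B, hB, hAB, rfl⟩ := T.binary _ hC (Finset.one_lt_card_iff_nontrivial.2 hnt)
  have hAne := T.cluster_nonempty A hA
  have hBne := T.cluster_nonempty B hB
  have hA_lt : A ⊂ A ∪ B := left_lt_sup.2 fun hBA =>
    hBne.ne_empty ((Finset.disjoint_self_iff_empty B).1 (hAB.mono_left hBA))
  have hB_lt : B ⊂ A ∪ B := right_lt_sup.2 fun hAB' =>
    hAne.ne_empty ((Finset.disjoint_self_iff_empty A).1 (hAB.mono_right hAB'))
  have hdisj : Disjoint (T.clusters.filter (· ⊆ A)) (T.clusters.filter (· ⊆ B)) :=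
    Finset.disjoint_filter.2 fun D hD hDA hDB =>
      (T.cluster_nonempty D hD).ne_empty ((Finset.disjoint_self_iff_empty D).1 (hAB.mono hDA hDB))
  have hnotMem : A ∪ B ∉ T.clusters.filter (· ⊆ A) ∪ T.clusters.filter (· ⊆ B) := by
    simp only [Finset.mem_union, Finset.mem_filter, not_or, not_and]
    exact ⟨fun _ => hA_lt.not_superset, fun _ => hB_lt.not_superset⟩
  rw [T.filter_subset_union_eq hA hB hC, Finset.card_insert_of_notMem hnotMem,
    Finset.card_union_of_disjoint hdisj, ih A hA_lt hA, ih B hB_lt hB,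
    Finset.card_union_of_disjoint hAB]
  have := hAne.card_pos
  have := hBne.card_pos
  omega

lemma card_clusters : T.clusters.card = 2 * L.card - 1 := by
  simpa [Finset.filter_true_of_mem T.subset_leaves] using T.card_filter_subset T.leaves_mem

lemma eq_of_clusters_subset {S : PTree X L} (h : T.clusters ⊆ S.clusters) : T = S :=
  T.ext_clusters <| Finset.eq_of_subset_of_card_le h (by rw [card_clusters, card_clusters])

end PTree

variable {L : Finset X}

lemma mdc_self (S : PTree X L) : mdc S S = 0 :=
  Finset.sum_eq_zero fun _ hC => by
    rw [kOf_of_mem (Finset.mem_filter.1 hC).1, Nat.sub_self]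

lemma clusters_subset_of_mdc_eq_zero {T S : PTree X L} (h : mdc T S = 0) :
    S.clusters ⊆ T.clusters := by
  intro C hC
  by_cases hCL : C = L
  · exact hCL ▸ T.leaves_mem
  by_cases hC1 : C.card = 1
  · obtain ⟨x, rfl⟩ := Finset.card_eq_one.1 hC1
    exact T.singleton_mem x (S.subset_leaves _ hC (Finset.mem_singleton_self x))
  have hk : kOf T.clusters C - 1 = 0 :=
    Finset.sum_eq_zero_iff.1 h C (Finset.mem_filter.2 ⟨hC, hCL, hC1⟩)
  exact mem_of_kOf_le_one (fun x hx => T.singleton_mem x (S.subset_leaves C hC hx))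
    (S.cluster_nonempty C hC) (by omega)

theorem stmt5_general {X : Type*} [DecidableEq X] (L : Finset X)
    (T S : PTree X L) :
    mdc S S = 0 ∧ (mdc T S = 0 → T = S) :=
  ⟨mdc_self S, fun h => (S.eq_of_clusters_subset (clusters_subset_of_mdc_eq_zero h)).symm⟩

/-- `l(S,S) = 0`, and conversely `l(T,S) = 0` implies `T = S` (for `|X| ≥ 2`). -/
theorem stmt5 {X : Type*} [DecidableEq X] (L : Finset X) (hL : 2 ≤ L.card)
    (T S : PTree X L) :
    mdc S S = 0 ∧ (mdc T S = 0 → T = S) :=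
  stmt5_general L T S
end

section
/- Let X = {1,2,3,4} and let G_m be the multiset of gene trees consisting of 11 copies of T2, 10 copies of T4, 2 copies of T6, 3 copies of T7 and 3 copies of T15, where T2 has nontrivial clusters {1,2},{1,2,4}; T4 has clusters {1,3},{1,3,4}; T6 has clusters {1,4},{1,3,4}; T7 has clusters {2,3},{1,2,3}; T15 has clusters {1,4},{2,3}. Then the tree T1 with clusters {1,2},{1,2,3} is the unique minimizer over all 15 rooted binary trees S on X of the total MDC score L(S) = Σ_{T in G_m} l(T,S), with L(T1) = 46. -/
open scoped Classical

variable {X : Type*} [DecidableEq X]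

/-!
The total score splits over the nontrivial clusters `C` of the species tree `S` as
`∑ gmCost C`, where `gmCost C = ∑_T mult(T) (k_T(C) - 1)` is computed once and for all from the
gene trees. Every binary tree on four leaves has two distinct nontrivial clusters, which are
compatible, and a finite check over compatible pairs shows that the pair `{0,1}, {0,1,2}` of
`T₁` costs `46` while every other pair costs at least `47`. Costs are positive, and a tree is
determined by its nontrivial clusters, so a tree `S ≠ T₁` whose pair is that of `T₁` has a
further nontrivial cluster and costs more than `46` as well.
-/

namespace PTree

variable {L : Finset X}

theorem ext {S T : PTree X L} (h : S.clusters = T.clusters) : S = T := by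
  cases S; cases T; cases h; rfl

def nontrivialClusters (S : PTree X L) : Finset (Finset X) :=
  S.clusters.filter (fun C => C ≠ L ∧ C.card ≠ 1)

variable {S : PTree X L} {C : Finset X}

theorem mdc_eq_sum_nontrivialClusters (T S : PTree X L) :
    mdc T S = ∑ C ∈ S.nontrivialClusters, (kOf T.clusters C - 1) :=
  rfl

theorem mem_clusters_of_mem_nontrivialClusters (h : C ∈ S.nontrivialClusters) :
    C ∈ S.clusters :=
  (Finset.mem_filter.1 h).1

theorem one_lt_card_of_mem_nontrivialClusters (h : C ∈ S.nontrivialClusters) :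
    1 < C.card := by
  obtain ⟨hC, -, h1⟩ := Finset.mem_filter.1 h
  have := (S.cluster_nonempty C hC).card_pos
  omega

theorem card_lt_of_mem_nontrivialClusters (h : C ∈ S.nontrivialClusters) :
    C.card < L.card := by
  obtain ⟨hC, hL, -⟩ := Finset.mem_filter.1 h
  exact Finset.card_lt_card (Finset.ssubset_iff_subset_ne.2 ⟨S.subset_leaves C hC, hL⟩)

theorem mem_nontrivialClusters_of_card (hC : C ∈ S.clusters) (h1 : 1 < C.card)
    (hL : C.card < L.card) : C ∈ S.nontrivialClusters :=
  Finset.mem_filter.2 ⟨hC, by rintro rfl; omega, by omega⟩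

theorem clusters_eq_insert_union (S : PTree X L) :
    S.clusters = insert L (L.image singleton ∪ S.nontrivialClusters) := by
  ext C
  simp only [Finset.mem_insert, Finset.mem_union, Finset.mem_image]
  constructor
  · intro hC
    by_cases hL : C = L
    · exact Or.inl hL
    by_cases h1 : C.card = 1
    · obtain ⟨x, rfl⟩ := Finset.card_eq_one.1 h1
      exact Or.inr (Or.inl ⟨x, S.subset_leaves _ hC (Finset.mem_singleton_self x), rfl⟩)
    · exact Or.inr (Or.inr (Finset.mem_filter.2 ⟨hC, hL, h1⟩))
  · rintro (rfl | ⟨x, hx, rfl⟩ | hC)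
    · exact S.leaves_mem
    · exact S.singleton_mem x hx
    · exact mem_clusters_of_mem_nontrivialClusters hC

theorem eq_of_nontrivialClusters_eq {S T : PTree X L}
    (h : S.nontrivialClusters = T.nontrivialClusters) : S = T :=
  ext (by rw [clusters_eq_insert_union S, clusters_eq_insert_union T, h])

theorem exists_cherry (S : PTree X L) {C : Finset X} (hC : C ∈ S.clusters) (h : 1 < C.card) :
    ∃ A ∈ S.clusters, A ⊆ C ∧ A.card = 2 := by
  obtain ⟨A, hA, B, hB, hAB, rfl⟩ := S.binary C hC h
  have hcard := Finset.card_union_of_disjoint hAB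
  have hA0 := (S.cluster_nonempty A hA).card_pos
  have hB0 := (S.cluster_nonempty B hB).card_pos
  by_cases hA1 : 1 < A.card
  · obtain ⟨D, hD, hDA, hD2⟩ := S.exists_cherry hA hA1
    exact ⟨D, hD, hDA.trans Finset.subset_union_left, hD2⟩
  by_cases hB1 : 1 < B.card
  · obtain ⟨D, hD, hDB, hD2⟩ := S.exists_cherry hB hB1
    exact ⟨D, hD, hDB.trans Finset.subset_union_right, hD2⟩
  exact ⟨A ∪ B, hC, subset_rfl, by omega⟩
termination_by C.card

theorem exists_ne_mem_nontrivialClusters (S : PTree (Fin 4) Finset.univ) :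
    ∃ A ∈ S.nontrivialClusters, ∃ B ∈ S.nontrivialClusters, A ≠ B := by
  have of_card_three : ∀ C ∈ S.clusters, C.card = 3 →
      ∃ A ∈ S.nontrivialClusters, ∃ B ∈ S.nontrivialClusters, A ≠ B := by
    intro C hC h3
    obtain ⟨A, hA, -, hA2⟩ := S.exists_cherry hC (by omega)
    exact ⟨A, mem_nontrivialClusters_of_card hA (by omega) (by rw [Finset.card_univ, Fintype.card_fin]; omega),
      C, mem_nontrivialClusters_of_card hC (by omega) (by rw [Finset.card_univ, Fintype.card_fin]; omega), by rintro rfl; omega⟩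
  obtain ⟨A, hA, B, hB, hAB, hunion⟩ := S.binary _ S.leaves_mem (by decide)
  have hcard : A.card + B.card = 4 := by
    rw [← Finset.card_union_of_disjoint hAB, hunion]; rfl
  have hA0 := (S.cluster_nonempty A hA).card_pos
  have hB0 := (S.cluster_nonempty B hB).card_pos
  by_cases hA1 : A.card = 1
  · exact of_card_three B hB (by omega)
  by_cases hB1 : B.card = 1
  · exact of_card_three A hA (by omega)
  refine ⟨A, mem_nontrivialClusters_of_card hA (by omega) (by rw [Finset.card_univ, Fintype.card_fin]; omega),
    B, mem_nontrivialClusters_of_card hB (by omega) (by rw [Finset.card_univ, Fintype.card_fin]; omega), ?_⟩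
  rintro rfl
  exact (S.cluster_nonempty A hA).ne_empty (disjoint_self.1 hAB)

end PTree

noncomputable def gmCost (C : Finset (Fin 4)) : ℕ :=
  11 * (kOf (cl4 {0,1} {0,1,3}) C - 1) + 10 * (kOf (cl4 {0,2} {0,2,3}) C - 1) +
    2 * (kOf (cl4 {0,3} {0,2,3}) C - 1) + 3 * (kOf (cl4 {1,2} {0,1,2}) C - 1) +
    3 * (kOf (cl4 {0,3} {1,2}) C - 1)

theorem gmCost_pos : ∀ C : Finset (Fin 4), 1 < C.card → C.card < 4 → 0 < gmCost C := by
  decide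

theorem gmCost_pair : ∀ A B : Finset (Fin 4), 1 < A.card → A.card < 4 → 1 < B.card →
    B.card < 4 → A ≠ B → (A ⊆ B ∨ B ⊆ A ∨ Disjoint A B) →
    ({A, B} : Finset (Finset (Fin 4))) = {{0,1}, {0,1,2}} ∨ 47 ≤ ∑ C ∈ {A, B}, gmCost C := by
  decide

theorem gmCost_T1 : ∑ C ∈ ({{0,1}, {0,1,2}} : Finset (Finset (Fin 4))), gmCost C = 46 := by
  decide

theorem score_eq_sum_gmCost {T2 T4 T6 T7 T15 : PTree (Fin 4) Finset.univ}
    (h2 : T2.clusters = cl4 {0,1} {0,1,3})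
    (h4 : T4.clusters = cl4 {0,2} {0,2,3})
    (h6 : T6.clusters = cl4 {0,3} {0,2,3})
    (h7 : T7.clusters = cl4 {1,2} {0,1,2})
    (h15 : T15.clusters = cl4 {0,3} {1,2}) (S : PTree (Fin 4) Finset.univ) :
    11 * mdc T2 S + 10 * mdc T4 S + 2 * mdc T6 S + 3 * mdc T7 S + 3 * mdc T15 S =
      ∑ C ∈ S.nontrivialClusters, gmCost C := by
  simp only [PTree.mdc_eq_sum_nontrivialClusters, h2, h4, h6, h7, h15, gmCost,
    Finset.mul_sum, ← Finset.sum_add_distrib]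

/-- Example 1: with the multiset `G_m` of 11 copies of `T₂`, 10 of `T₄`, 2 of `T₆`,
3 of `T₇` and 3 of `T₁₅` (taxa `1,2,3,4` encoded as `0,1,2,3`), the tree `T₁` is the
unique minimizer of the total MDC score, with score 46. -/
theorem stmt10 (T1 T2 T4 T6 T7 T15 : PTree (Fin 4) Finset.univ)
    (h1 : T1.clusters = cl4 {0,1} {0,1,2})
    (h2 : T2.clusters = cl4 {0,1} {0,1,3})
    (h4 : T4.clusters = cl4 {0,2} {0,2,3})
    (h6 : T6.clusters = cl4 {0,3} {0,2,3})
    (h7 : T7.clusters = cl4 {1,2} {0,1,2})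
    (h15 : T15.clusters = cl4 {0,3} {1,2}) :
    11 * mdc T2 T1 + 10 * mdc T4 T1 + 2 * mdc T6 T1 + 3 * mdc T7 T1 + 3 * mdc T15 T1 = 46 ∧
    ∀ S : PTree (Fin 4) Finset.univ, S ≠ T1 →
      11 * mdc T2 T1 + 10 * mdc T4 T1 + 2 * mdc T6 T1 + 3 * mdc T7 T1 + 3 * mdc T15 T1 < 11 * mdc T2 S + 10 * mdc T4 S + 2 * mdc T6 S + 3 * mdc T7 S + 3 * mdc T15 S := by
  have hT1 : T1.nontrivialClusters = {{0,1}, {0,1,2}} := by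
    rw [PTree.nontrivialClusters, h1]; decide
  have score_T1 : 11 * mdc T2 T1 + 10 * mdc T4 T1 + 2 * mdc T6 T1 + 3 * mdc T7 T1 +
      3 * mdc T15 T1 = 46 := by
    rw [score_eq_sum_gmCost h2 h4 h6 h7 h15, hT1, gmCost_T1]
  refine ⟨score_T1, fun S hS => ?_⟩
  rw [score_T1, score_eq_sum_gmCost h2 h4 h6 h7 h15]
  obtain ⟨A, hA, B, hB, hAB⟩ := S.exists_ne_mem_nontrivialClusters
  have hsub : {A, B} ⊆ S.nontrivialClusters := Finset.insert_subset hA (by simpa using hB)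
  have card_bounds : ∀ C ∈ S.nontrivialClusters, 1 < C.card ∧ C.card < 4 := fun C hC =>
    ⟨PTree.one_lt_card_of_mem_nontrivialClusters hC,
      by simpa using PTree.card_lt_of_mem_nontrivialClusters hC⟩
  rcases gmCost_pair A B (card_bounds A hA).1 (card_bounds A hA).2 (card_bounds B hB).1
      (card_bounds B hB).2 hAB (S.hierarchy A (PTree.mem_clusters_of_mem_nontrivialClusters hA)
        B (PTree.mem_clusters_of_mem_nontrivialClusters hB)) with hP | hP
  · have hne : {A, B} ≠ S.nontrivialClusters := fun h =>
      hS (PTree.eq_of_nontrivialClusters_eq (by rw [← h, hP, hT1]))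
    obtain ⟨C, hC, hCP⟩ := Finset.exists_of_ssubset (Finset.ssubset_iff_subset_ne.2 ⟨hsub, hne⟩)
    calc 46 = ∑ C ∈ {A, B}, gmCost C := by rw [hP, gmCost_T1]
      _ < ∑ C ∈ S.nontrivialClusters, gmCost C :=
        Finset.sum_lt_sum_of_subset hsub hC hCP
          (gmCost_pos C (card_bounds C hC).1 (card_bounds C hC).2) (fun _ _ _ => Nat.zero_le _)
  · calc 46 < ∑ C ∈ {A, B}, gmCost C := by omega
      _ ≤ ∑ C ∈ S.nontrivialClusters, gmCost C := Finset.sum_le_sum_of_subset hsub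
end

section
/- With G_m as in Example 1 (11 copies of T2 with clusters {1,2},{1,2,4}; 10 copies of T4 with clusters {1,3},{1,3,4}; 2 copies of T6 with clusters {1,4},{1,3,4}; 3 copies of T7 with clusters {2,3},{1,2,3}; 3 copies of T15 with clusters {1,4},{2,3}), for every 3-element subset Y of X = {1,2,3,4}, the restriction of T1 (clusters {1,2},{1,2,3}) to Y is NOT a minimizer of the total MDC score Σ_{T in G_m} l(T|_Y, S') over rooted binary trees S' on Y. -/
open scoped Classical

variable {X : Type*} [DecidableEq X]

/-!
Restricted to a 3-element leaf set `Y`, every tree becomes a rooted triple, determined by its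
cherry (its unique 2-element cluster), and the MDC score between two rooted triples is `0` or `1`
according as their cherries agree. So the total score of a species triple with cherry `q` is the
total weight of the gene trees whose restricted cherry differs from `q`, and a minimizer must
carry a cherry of maximal weight. With the leaves numbered `0, …, 3` as in `cl4`, the cherry of
`T₁|_Y` is always outweighed: by `{0,2}` (12 against 11) on `{0,1,2}`, by `{0,3}` (15 against 14)
on `{0,1,3}`, by `{0,3}` (16 against 13) on `{0,2,3}` and by `{2,3}` (12 against 6) on `{1,2,3}`.
-/

section ThreeTaxon

variable {Y p q : Finset X}

def threeTaxonClusters (Y p : Finset X) : Finset (Finset X) :=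
  insert Y (insert p (Y.image ({·})))

theorem mem_threeTaxonClusters {C : Finset X} :
    C ∈ threeTaxonClusters Y p ↔ C = Y ∨ C = p ∨ ∃ x ∈ Y, C = {x} := by
  simp [threeTaxonClusters, eq_comm]

theorem subset_of_mem_threeTaxonClusters (hpY : p ⊆ Y) {C : Finset X}
    (hC : C ∈ threeTaxonClusters Y p) : C ⊆ Y := by
  rcases mem_threeTaxonClusters.1 hC with rfl | rfl | ⟨x, hx, rfl⟩
  exacts [subset_rfl, hpY, Finset.singleton_subset_iff.2 hx]

theorem Finset.singleton_subset_or_disjoint (x : X) (C : Finset X) : {x} ⊆ C ∨ Disjoint {x} C := by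
  by_cases hx : x ∈ C
  · exact .inl (Finset.singleton_subset_iff.2 hx)
  · exact .inr (Finset.disjoint_singleton_left.2 hx)

theorem threeTaxonClusters_hierarchy (hpY : p ⊆ Y) {C D : Finset X}
    (hC : C ∈ threeTaxonClusters Y p) (hD : D ∈ threeTaxonClusters Y p) :
    C ⊆ D ∨ D ⊆ C ∨ Disjoint C D := by
  rcases mem_threeTaxonClusters.1 hC with rfl | rfl | ⟨x, -, rfl⟩
  · exact .inr (.inl (subset_of_mem_threeTaxonClusters hpY hD))
  · rcases mem_threeTaxonClusters.1 hD with rfl | rfl | ⟨y, -, rfl⟩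
    · exact .inl hpY
    · exact .inl subset_rfl
    · rcases Finset.singleton_subset_or_disjoint y C with h | h
      exacts [.inr (.inl h), .inr (.inr h.symm)]
  · rcases Finset.singleton_subset_or_disjoint x D with h | h
    exacts [.inl h, .inr (.inr h)]

theorem threeTaxonClusters_binary (hY : Y.card = 3) (hpY : p ⊆ Y) (hp : p.card = 2)
    {C : Finset X} (hC : C ∈ threeTaxonClusters Y p) (hC1 : 1 < C.card) :
    ∃ A ∈ threeTaxonClusters Y p, ∃ B ∈ threeTaxonClusters Y p, Disjoint A B ∧ A ∪ B = C := by
  rcases mem_threeTaxonClusters.1 hC with rfl | rfl | ⟨x, hx, rfl⟩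
  · obtain ⟨x, hx⟩ := Finset.card_eq_one.1 (show (C \ p).card = 1 by
      rw [Finset.card_sdiff_of_subset hpY]; omega)
    refine ⟨p, mem_threeTaxonClusters.2 (.inr (.inl rfl)), {x},
      mem_threeTaxonClusters.2 (.inr (.inr ⟨x, ?_, rfl⟩)), hx ▸ Finset.disjoint_sdiff, ?_⟩
    · exact Finset.sdiff_subset (hx ▸ Finset.mem_singleton_self x)
    · rw [← hx, Finset.union_sdiff_of_subset hpY]
  · obtain ⟨a, b, hab, rfl⟩ := Finset.card_eq_two.1 hp
    refine ⟨{a}, mem_threeTaxonClusters.2 (.inr (.inr ⟨a, hpY (by simp), rfl⟩)), {b},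
      mem_threeTaxonClusters.2 (.inr (.inr ⟨b, hpY (by simp), rfl⟩)),
      Finset.disjoint_singleton.2 hab, (Finset.insert_eq a {b}).symm⟩
  · simp at hC1

def threeTaxonTree (hY : Y.card = 3) (hpY : p ⊆ Y) (hp : p.card = 2) : PTree X Y where
  clusters := threeTaxonClusters Y p
  subset_leaves _ := subset_of_mem_threeTaxonClusters hpY
  cluster_nonempty C hC := by
    rcases mem_threeTaxonClusters.1 hC with rfl | rfl | ⟨x, hx, rfl⟩
    exacts [Finset.card_pos.1 (by omega), Finset.card_pos.1 (by omega), Finset.singleton_nonempty x]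
  leaves_mem := mem_threeTaxonClusters.2 (.inl rfl)
  singleton_mem x hx := mem_threeTaxonClusters.2 (.inr (.inr ⟨x, hx, rfl⟩))
  hierarchy _ hC _ hD := threeTaxonClusters_hierarchy hpY hC hD
  binary _ hC hC1 := threeTaxonClusters_binary hY hpY hp hC hC1

theorem filter_nontrivial_threeTaxonClusters (hY : Y.card = 3) (hq : q.card = 2) :
    (threeTaxonClusters Y q).filter (fun C => C ≠ Y ∧ C.card ≠ 1) = {q} := by
  ext C
  simp only [Finset.mem_filter, mem_threeTaxonClusters, Finset.mem_singleton]
  constructor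
  · rintro ⟨rfl | rfl | ⟨x, -, rfl⟩, hCY, hC1⟩
    · exact absurd rfl hCY
    · rfl
    · simp at hC1
  · rintro rfl
    exact ⟨.inr (.inl rfl), fun h => by rw [h] at hq; omega, by omega⟩

theorem maxClustersIn_threeTaxonClusters_self (hY : Y.card = 3) (hq : q.card = 2) :
    maxClustersIn (threeTaxonClusters Y q) q = {q} := by
  ext D
  simp only [maxClustersIn, Finset.mem_filter, Finset.mem_singleton]
  constructor
  · rintro ⟨hD, hDq, hmax⟩
    rcases mem_threeTaxonClusters.1 hD with rfl | rfl | ⟨x, -, rfl⟩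
    · have := Finset.card_le_card hDq
      omega
    · rfl
    · refine absurd subset_rfl (hmax q (mem_threeTaxonClusters.2 (.inr (.inl rfl))) ?_)
      exact Finset.ssubset_iff_subset_ne.2 ⟨hDq, by rintro rfl; simp at hq⟩
  · rintro rfl
    exact ⟨mem_threeTaxonClusters.2 (.inr (.inl rfl)), subset_rfl, fun _ _ h => h.2⟩

theorem maxClustersIn_threeTaxonClusters_of_ne (hY : Y.card = 3) (hqY : q ⊆ Y)
    (hp : p.card = 2) (hq : q.card = 2) (hpq : p ≠ q) :
    maxClustersIn (threeTaxonClusters Y p) q = q.image ({·}) := by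
  have hpq' : ¬ p ⊆ q := fun h => hpq (Finset.eq_of_subset_of_card_le h (by omega))
  have hYq : ¬ Y ⊆ q := fun h => by have := Finset.card_le_card h; omega
  ext D
  simp only [maxClustersIn, Finset.mem_filter, Finset.mem_image]
  constructor
  · rintro ⟨hD, hDq, -⟩
    rcases mem_threeTaxonClusters.1 hD with rfl | rfl | ⟨x, -, rfl⟩
    · exact absurd hDq hYq
    · exact absurd hDq hpq'
    · exact ⟨x, Finset.singleton_subset_iff.1 hDq, rfl⟩
  · rintro ⟨x, hx, rfl⟩
    refine ⟨mem_threeTaxonClusters.2 (.inr (.inr ⟨x, hqY hx, rfl⟩)),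
      Finset.singleton_subset_iff.2 hx, fun D' hD' hxD' hD'q => ?_⟩
    rcases mem_threeTaxonClusters.1 hD' with rfl | rfl | ⟨y, -, rfl⟩
    · exact hYq hD'q
    · exact hpq' hD'q
    · simpa using Finset.card_lt_card hxD'

theorem mdcOfClusters_threeTaxonClusters (hY : Y.card = 3) (hqY : q ⊆ Y)
    (hp : p.card = 2) (hq : q.card = 2) :
    mdcOfClusters (threeTaxonClusters Y p) (threeTaxonClusters Y q) Y = if p = q then 0 else 1 := by
  rw [mdcOfClusters, filter_nontrivial_threeTaxonClusters hY hq, Finset.sum_singleton, kOf]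
  split_ifs with hpq
  · rw [hpq, maxClustersIn_threeTaxonClusters_self hY hq, Finset.card_singleton]
  · rw [maxClustersIn_threeTaxonClusters_of_ne hY hqY hp hq hpq,
      Finset.card_image_of_injective _ Finset.singleton_injective, hq]

end ThreeTaxon

/-- Two distinct 2-element subsets of a 3-element set overlap without being nested, so the
hierarchy property leaves room for only one cherry in the restriction. -/
theorem restrictClusters_eq_threeTaxonClusters {L Y p : Finset X} (T : PTree X L) (hYL : Y ⊆ L)
    (hY : Y.card = 3) (hp : p ∈ restrictClusters T Y) (hp2 : p.card = 2) :
    restrictClusters T Y = threeTaxonClusters Y p := by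
  simp only [restrictClusters, Finset.mem_filter, Finset.mem_image] at hp
  obtain ⟨⟨E, hE, rfl⟩, -⟩ := hp
  ext C
  simp only [restrictClusters, Finset.mem_filter, Finset.mem_image, mem_threeTaxonClusters]
  constructor
  · rintro ⟨⟨D, hD, rfl⟩, hne⟩
    have hcard : (D ∩ Y).card ≤ 3 := hY ▸ Finset.card_le_card Finset.inter_subset_right
    have hpos : 0 < (D ∩ Y).card := Finset.card_pos.2 hne
    interval_cases h : (D ∩ Y).card
    · obtain ⟨x, hx⟩ := Finset.card_eq_one.1 h
      exact .inr (.inr ⟨x, Finset.inter_subset_right (hx ▸ Finset.mem_singleton_self x), hx⟩)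
    · refine .inr (.inl ?_)
      rcases T.hierarchy D hD E hE with hDE | hED | hDE
      · exact Finset.eq_of_subset_of_card_le (Finset.inter_subset_inter_right hDE) (by omega)
      · exact (Finset.eq_of_subset_of_card_le (Finset.inter_subset_inter_right hED) (by omega)).symm
      · have hmeet : (D ∩ Y ∩ (E ∩ Y)).Nonempty :=
          Finset.inter_nonempty_of_card_lt_card_add_card Finset.inter_subset_right
            Finset.inter_subset_right (by omega)
        exact absurd (hDE.mono Finset.inter_subset_left Finset.inter_subset_left)
          (Finset.not_disjoint_iff_nonempty_inter.2 hmeet)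
    · exact .inl (Finset.eq_of_subset_of_card_le Finset.inter_subset_right (by omega))
  · rintro (rfl | rfl | ⟨x, hx, rfl⟩)
    · exact ⟨⟨L, T.leaves_mem, Finset.inter_eq_right.2 hYL⟩, Finset.card_pos.1 (by omega)⟩
    · exact ⟨⟨E, hE, rfl⟩, Finset.card_pos.1 (by omega)⟩
    · exact ⟨⟨{x}, T.singleton_mem x (hYL hx), Finset.inter_eq_left.2
        (Finset.singleton_subset_iff.2 hx)⟩, Finset.singleton_nonempty x⟩

def restrictedCherry (a b Y : Finset X) : Finset X :=
  if (a ∩ Y).card = 2 then a ∩ Y else b ∩ Y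

theorem restrictClusters_eq_of_clusters_eq_cl4 {T : PTree (Fin 4) Finset.univ}
    {a b Y : Finset (Fin 4)} (hT : T.clusters = cl4 a b) (hY : Y.card = 3)
    (hc : (restrictedCherry a b Y).card = 2) :
    restrictClusters T Y = threeTaxonClusters Y (restrictedCherry a b Y) := by
  refine restrictClusters_eq_threeTaxonClusters T (Finset.subset_univ Y) hY ?_ hc
  have hcY : restrictedCherry a b Y ∈ (cl4 a b).image (· ∩ Y) := by
    unfold restrictedCherry
    split_ifs
    exacts [Finset.mem_image_of_mem _ (by simp [cl4]), Finset.mem_image_of_mem _ (by simp [cl4])]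
  rw [restrictClusters, hT, Finset.mem_filter]
  exact ⟨hcY, Finset.card_pos.1 (by omega)⟩

theorem fin_four_card_eq_three {Y : Finset (Fin 4)} (hY : Y.card = 3) :
    Y = {0, 1, 2} ∨ Y = {0, 1, 3} ∨ Y = {0, 2, 3} ∨ Y = {1, 2, 3} := by
  revert Y; decide

/-- Example 1, non-heredity: for every 3-element subset `Y` of the taxa, the
restriction `T₁|_Y` is not a minimizer of the total MDC score of the restricted
gene trees over rooted binary trees on `Y`. -/
theorem stmt11 (T1 T2 T4 T6 T7 T15 : PTree (Fin 4) Finset.univ)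
    (h1 : T1.clusters = cl4 {0,1} {0,1,2})
    (h2 : T2.clusters = cl4 {0,1} {0,1,3})
    (h4 : T4.clusters = cl4 {0,2} {0,2,3})
    (h6 : T6.clusters = cl4 {0,3} {0,2,3})
    (h7 : T7.clusters = cl4 {1,2} {0,1,2})
    (h15 : T15.clusters = cl4 {0,3} {1,2}) :
    ∀ Y : Finset (Fin 4), Y.card = 3 →
      ∃ S' : PTree (Fin 4) Y,
        11 * mdcOfClusters (restrictClusters T2 Y) S'.clusters Y + 10 * mdcOfClusters (restrictClusters T4 Y) S'.clusters Y + 2 * mdcOfClusters (restrictClusters T6 Y) S'.clusters Y + 3 * mdcOfClusters (restrictClusters T7 Y) S'.clusters Y + 3 * mdcOfClusters (restrictClusters T15 Y) S'.clusters Y <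
        11 * mdcOfClusters (restrictClusters T2 Y) (restrictClusters T1 Y) Y + 10 * mdcOfClusters (restrictClusters T4 Y) (restrictClusters T1 Y) Y + 2 * mdcOfClusters (restrictClusters T6 Y) (restrictClusters T1 Y) Y + 3 * mdcOfClusters (restrictClusters T7 Y) (restrictClusters T1 Y) Y + 3 * mdcOfClusters (restrictClusters T15 Y) (restrictClusters T1 Y) Y := by
  intro Y hY
  rcases fin_four_card_eq_three hY with rfl | rfl | rfl | rfl
  on_goal 1 => refine ⟨threeTaxonTree (p := {0, 2}) hY (by decide) (by decide), ?_⟩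
  on_goal 2 => refine ⟨threeTaxonTree (p := {0, 3}) hY (by decide) (by decide), ?_⟩
  on_goal 3 => refine ⟨threeTaxonTree (p := {0, 3}) hY (by decide) (by decide), ?_⟩
  on_goal 4 => refine ⟨threeTaxonTree (p := {2, 3}) hY (by decide) (by decide), ?_⟩
  all_goals
    simp (disch := decide) only [threeTaxonTree, mdcOfClusters_threeTaxonClusters hY,
      restrictClusters_eq_of_clusters_eq_cl4 h1 hY, restrictClusters_eq_of_clusters_eq_cl4 h2 hY,
      restrictClusters_eq_of_clusters_eq_cl4 h4 hY, restrictClusters_eq_of_clusters_eq_cl4 h6 hY,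
      restrictClusters_eq_of_clusters_eq_cl4 h7 hY, restrictClusters_eq_of_clusters_eq_cl4 h15 hY]
    decide
end

section
/- Let X = {1,2,3,4} and let G_m consist of 2 copies of T1 (clusters {1,2},{1,2,3}), 2 copies of T12 (clusters {3,4},{2,3,4}), 1 copy of T14 (clusters {1,3},{2,4}) and 1 copy of T15 (clusters {1,4},{2,3}). Then the balanced tree T13 with clusters {1,2},{3,4} is the unique minimizer of the total MDC score Σ_{T in G_m} l(T,S) over all 15 rooted binary trees S on X, with total score 8, even though T13 does not occur in G_m. -/
open scoped Classical

variable {X : Type*} [DecidableEq X]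

/-! The root of a binary tree on four leaves splits them as 2 + 2 or 3 + 1, and a 3-element
cluster splits as 2 + 1; since clusters are pairwise nested or disjoint, there are no other
nontrivial clusters. So every species tree has cluster family `cl4 a b` with `a` a pair and `b`
the complementary pair or a triple containing `a` (fifteen trees in all), and the total score of
`G_m` is evaluated on each of them: `T₁₃` scores 8, every other tree at least 9. -/

open Finset

namespace PTree

variable {L : Finset X}

theorem clusters_injective :
    Function.Injective (clusters : PTree X L → Finset (Finset X)) := by
  rintro ⟨_⟩ ⟨_⟩ h
  simp_all

theorem subset_or_subset_of_ssubset_union_s13 (T : PTree X L) {A B C : Finset X}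
    (hA : A ∈ T.clusters) (hB : B ∈ T.clusters) (hC : C ∈ T.clusters)
    (hAB : Disjoint A B) (hCAB : C ⊂ A ∪ B) : C ⊆ A ∨ C ⊆ B := by
  rcases T.hierarchy C hC A hA with hCA | hAC | hCA
  · exact Or.inl hCA
  · rcases T.hierarchy C hC B hB with hCB | hBC | hCB
    · exact absurd ((disjoint_self_iff_empty A).mp (hAB.mono_right (hAC.trans hCB)))
        (T.cluster_nonempty A hA).ne_empty
    · exact absurd (union_subset hAC hBC) (not_subset_of_ssubset hCAB)
    · exact Or.inl (hCB.left_le_of_le_sup_right hCAB.subset)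
  · exact Or.inr (hCA.left_le_of_le_sup_left hCAB.subset)

theorem two_le_card_of_card_ne_one (T : PTree X L) {C : Finset X} (hC : C ∈ T.clusters)
    (h1 : C.card ≠ 1) : 2 ≤ C.card := by
  have := (T.cluster_nonempty C hC).card_pos
  omega

theorem exists_card_two_subset (T : PTree X L) {A : Finset X} (hA : A ∈ T.clusters)
    (hA3 : A.card = 3) :
    ∃ P ∈ T.clusters, P.card = 2 ∧ P ⊆ A := by
  obtain ⟨P, hP, Q, hQ, hPQ, rfl⟩ := T.binary A hA (by omega)
  rw [card_union_of_disjoint hPQ] at hA3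
  have := (T.cluster_nonempty P hP).card_pos
  have := (T.cluster_nonempty Q hQ).card_pos
  rcases (by omega : P.card = 2 ∨ Q.card = 2) with hP2 | hQ2
  · exact ⟨P, hP, hP2, subset_union_left⟩
  · exact ⟨Q, hQ, hQ2, subset_union_right⟩

end PTree

theorem mem_cl4 {a b C : Finset (Fin 4)} :
    C ∈ cl4 a b ↔ C = univ ∨ C.card = 1 ∨ C = a ∨ C = b := by
  rw [card_eq_one]
  constructor
  · simp only [cl4, mem_insert, mem_singleton]
    rintro (h | h | h | h | h | h | h) <;> simp [h]
  · rintro (h | ⟨x, rfl⟩ | h | h)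
    · simp [cl4, h]
    · fin_cases x <;> simp [cl4]
    · simp [cl4, h]
    · simp [cl4, h]

namespace PTree

variable (S : PTree (Fin 4) univ)

theorem clusters_eq_cl4 {a b : Finset (Fin 4)} (ha : a ∈ S.clusters) (hb : b ∈ S.clusters)
    (h : ∀ C ∈ S.clusters, C ≠ univ → C.card ≠ 1 → C = a ∨ C = b) :
    S.clusters = cl4 a b := by
  ext C
  rw [mem_cl4]
  constructor
  · intro hC
    by_cases hU : C = univ
    · exact Or.inl hU
    by_cases h1 : C.card = 1
    · exact Or.inr (Or.inl h1)
    exact Or.inr (Or.inr (h C hC hU h1))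
  · rintro (rfl | h1 | rfl | rfl)
    · exact S.leaves_mem
    · obtain ⟨x, rfl⟩ := card_eq_one.mp h1
      exact S.singleton_mem x (mem_univ x)
    · exact ha
    · exact hb

theorem clusters_eq_cl4_of_balanced {A B : Finset (Fin 4)} (hA : A ∈ S.clusters)
    (hB : B ∈ S.clusters) (hAB : Disjoint A B) (hU : A ∪ B = univ)
    (hA2 : A.card = 2) (hB2 : B.card = 2) : S.clusters = cl4 A B := by
  refine S.clusters_eq_cl4 hA hB fun C hC hCU hC1 => ?_
  have hC2 := S.two_le_card_of_card_ne_one hC hC1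
  rcases S.subset_or_subset_of_ssubset_union_s13 hA hB hC hAB
      (hU ▸ ssubset_univ_iff.mpr hCU) with hCA | hCB
  · exact Or.inl (eq_of_subset_of_card_le hCA (by omega))
  · exact Or.inr (eq_of_subset_of_card_le hCB (by omega))

theorem exists_clusters_eq_cl4_of_caterpillar {A B : Finset (Fin 4)} (hA : A ∈ S.clusters)
    (hB : B ∈ S.clusters) (hAB : Disjoint A B) (hU : A ∪ B = univ) (hA3 : A.card = 3) :
    ∃ P, S.clusters = cl4 P A ∧ P.card = 2 ∧ P ⊆ A := by
  obtain ⟨P, hP, hP2, hPA⟩ := S.exists_card_two_subset hA hA3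
  refine ⟨P, S.clusters_eq_cl4 hP hA fun C hC hCU hC1 => ?_, hP2, hPA⟩
  have hC2 := S.two_le_card_of_card_ne_one hC hC1
  have hB1 : B.card = 1 := by
    have := congrArg card hU
    rw [card_union_of_disjoint hAB, card_univ, Fintype.card_fin] at this
    omega
  have hCA : C ⊆ A := (S.subset_or_subset_of_ssubset_union_s13 hA hB hC hAB
      (hU ▸ ssubset_univ_iff.mpr hCU)).resolve_right fun hCB => by
    have := card_le_card hCB
    omega
  have hC_le := card_le_card hCA
  by_cases hC3 : C.card = 3
  · exact Or.inr (eq_of_subset_of_card_le hCA (by omega))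
  left
  rcases S.hierarchy C hC P hP with hCP | hPC | hCP
  · exact eq_of_subset_of_card_le hCP (by omega)
  · exact (eq_of_subset_of_card_le hPC (by omega)).symm
  · have := card_le_card (union_subset hCA hPA)
    rw [card_union_of_disjoint hCP] at this
    omega

theorem exists_clusters_eq_cl4 : ∃ a b, S.clusters = cl4 a b ∧ a.card = 2 ∧
    (b.card = 2 ∧ Disjoint a b ∨ b.card = 3 ∧ a ⊆ b) := by
  obtain ⟨A, hA, B, hB, hAB, hU⟩ := S.binary univ S.leaves_mem (by simp)
  have hcard : A.card + B.card = 4 := by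
    rw [← card_union_of_disjoint hAB, hU, card_univ, Fintype.card_fin]
  have := (S.cluster_nonempty A hA).card_pos
  have := (S.cluster_nonempty B hB).card_pos
  rcases (by omega : A.card = 3 ∨ B.card = 3 ∨ A.card = 2 ∧ B.card = 2)
    with hA3 | hB3 | ⟨hA2, hB2⟩
  · obtain ⟨P, hS, hP2, hPA⟩ := S.exists_clusters_eq_cl4_of_caterpillar hA hB hAB hU hA3
    exact ⟨P, A, hS, hP2, Or.inr ⟨hA3, hPA⟩⟩
  · obtain ⟨P, hS, hP2, hPB⟩ := S.exists_clusters_eq_cl4_of_caterpillar hB hA hAB.symm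
      (union_comm A B ▸ hU) hB3
    exact ⟨P, B, hS, hP2, Or.inr ⟨hB3, hPB⟩⟩
  · exact ⟨A, B, S.clusters_eq_cl4_of_balanced hA hB hAB hU hA2 hB2, hA2,
      Or.inl ⟨hB2, hAB⟩⟩

end PTree

noncomputable def gmScore (Scl : Finset (Finset (Fin 4))) : ℕ :=
  2 * mdcOfClusters (cl4 {0,1} {0,1,2}) Scl univ +
  2 * mdcOfClusters (cl4 {2,3} {1,2,3}) Scl univ +
  1 * mdcOfClusters (cl4 {0,2} {1,3}) Scl univ +
  1 * mdcOfClusters (cl4 {0,3} {1,2}) Scl univ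

theorem gmScore_balanced : gmScore (cl4 {0,1} {2,3}) = 8 := by decide

theorem eight_lt_gmScore : ∀ a b : Finset (Fin 4), a.card = 2 →
    (b.card = 2 ∧ Disjoint a b ∨ b.card = 3 ∧ a ⊆ b) →
    cl4 a b ≠ cl4 {0,1} {2,3} → 8 < gmScore (cl4 a b) := by
  decide

/-- Example 2: with `G_m` = 2 copies of `T₁`, 2 of `T₁₂`, 1 of `T₁₄`, 1 of `T₁₅`,
the balanced tree `T₁₃` is the unique minimizer of the total MDC score, with score 8,
even though `T₁₃` does not occur in `G_m`. -/
theorem stmt13 (T1 T12 T13 T14 T15 : PTree (Fin 4) Finset.univ)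
    (h1 : T1.clusters = cl4 {0,1} {0,1,2})
    (h12 : T12.clusters = cl4 {2,3} {1,2,3})
    (h13 : T13.clusters = cl4 {0,1} {2,3})
    (h14 : T14.clusters = cl4 {0,2} {1,3})
    (h15 : T15.clusters = cl4 {0,3} {1,2}) :
    2 * mdc T1 T13 + 2 * mdc T12 T13 + 1 * mdc T14 T13 + 1 * mdc T15 T13 = 8 ∧
    (∀ S : PTree (Fin 4) Finset.univ, S ≠ T13 →
      2 * mdc T1 T13 + 2 * mdc T12 T13 + 1 * mdc T14 T13 + 1 * mdc T15 T13 < 2 * mdc T1 S + 2 * mdc T12 S + 1 * mdc T14 S + 1 * mdc T15 S) ∧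
    T13 ≠ T1 ∧ T13 ≠ T12 ∧ T13 ≠ T14 ∧ T13 ≠ T15 := by
  have score : ∀ S : PTree (Fin 4) univ,
      2 * mdc T1 S + 2 * mdc T12 S + 1 * mdc T14 S + 1 * mdc T15 S = gmScore S.clusters :=
    fun S => by simp only [mdc, gmScore, h1, h12, h14, h15]
  have score13 := (score T13).trans (h13 ▸ gmScore_balanced)
  refine ⟨score13, fun S hS => ?_, ?_, ?_, ?_, ?_⟩
  · obtain ⟨a, b, hSab, ha, hb⟩ := S.exists_clusters_eq_cl4
    rw [score13, score, hSab]
    exact eight_lt_gmScore a b ha hb fun h =>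
      hS (PTree.clusters_injective (by rw [hSab, h, h13]))
  all_goals refine PTree.clusters_injective.ne_iff.mp ?_
  · rw [h13, h1]; decide
  · rw [h13, h12]; decide
  · rw [h13, h14]; decide
  · rw [h13, h15]; decide
end

section
/- There exists a multiset G_m of rooted binary gene trees on X = {1,2,3,4} and a tree S on X such that S is the unique minimizer of the total MDC score Σ_{T in G_m} l(T,S') over all rooted binary trees S' on X, but for every proper 3-element subset Y ⊂ X, the restriction S|_Y is not a minimizer of Σ_{T in G_m} l(T|_Y, S'') over rooted binary trees S'' on Y. (I.e., MDC is non-hereditary.) -/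
open scoped Classical

variable {X : Type*} [DecidableEq X]

/-! Every rooted binary tree on four leaves has exactly two nontrivial clusters: a cherry
together with either a three-element cluster containing it or the complementary cherry. The
candidate species trees on `Fin 4` therefore form an explicit family of fifteen cluster sets,
and on a triple they are the three rooted triples; both claims are then finitely many
comparisons of MDC scores, settled by `decide`. With `S = (((0,1),2),3)` the restricted
totals are `18 > 17` on `{0,1,2}`, `15 > 14` on `{0,1,3}`, `16 > 13` on `{0,2,3}` and
`23 > 17` on `{1,2,3}`. -/

open Finset

theorem PTree.clusters_injective_s16 {L : Finset X} :
    Function.Injective (PTree.clusters : PTree X L → Finset (Finset X)) := by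
  rintro ⟨⟩ ⟨⟩ h
  congr

theorem PTree.restrictClusters_self {L : Finset X} (T : PTree X L) :
    restrictClusters T L = T.clusters := by
  ext C
  simp only [restrictClusters, mem_filter, mem_image]
  constructor
  · rintro ⟨⟨D, hD, rfl⟩, -⟩
    rwa [inter_eq_left.2 (T.subset_leaves D hD)]
  · intro hC
    exact ⟨⟨C, hC, inter_eq_left.2 (T.subset_leaves C hC)⟩, T.cluster_nonempty C hC⟩

theorem PTree.exists_card_two_subset_of_card_eq_three {L : Finset X} (T : PTree X L)
    {C : Finset X} (hC : C ∈ T.clusters) (hC3 : C.card = 3) :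
    ∃ p ∈ T.clusters, p.card = 2 ∧ p ⊆ C := by
  obtain ⟨A, hA, B, hB, hAB, rfl⟩ := T.binary C hC (by omega)
  have hcard := card_union_of_disjoint hAB
  have hA0 := (T.cluster_nonempty A hA).card_pos
  have hB0 := (T.cluster_nonempty B hB).card_pos
  rcases (by omega : A.card = 2 ∨ B.card = 2) with h | h
  · exact ⟨A, hA, h, subset_union_left⟩
  · exact ⟨B, hB, h, subset_union_right⟩

def ClustersCompatible (C D : Finset X) : Prop :=
  C ⊆ D ∨ D ⊆ C ∨ Disjoint C D

instance : DecidableRel (ClustersCompatible (X := X)) := fun _ _ =>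
  inferInstanceAs (Decidable (_ ∨ _))

noncomputable def totalMDC {L : Finset X} (Gm : Multiset (PTree X L))
    (Scl : Finset (Finset X)) (Y : Finset X) : ℕ :=
  (Gm.map fun T => mdcOfClusters (restrictClusters T Y) Scl Y).sum

theorem sum_map_mdc_eq_totalMDC {L : Finset X} (Gm : Multiset (PTree X L)) (S : PTree X L) :
    (Gm.map fun T => mdc T S).sum = totalMDC Gm S.clusters L := by
  simp only [totalMDC, mdc, PTree.restrictClusters_self]

section FourLeaves

def IsNontrivialClusterPair (p q : Finset (Fin 4)) : Prop :=
  p.card = 2 ∧ (q.card = 3 ∧ p ⊆ q ∨ q.card = 2 ∧ Disjoint p q)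

instance : DecidableRel IsNontrivialClusterPair := fun _ _ =>
  inferInstanceAs (Decidable (_ ∧ _))

theorem PTree.exists_isNontrivialClusterPair (T : PTree (Fin 4) univ) :
    ∃ p ∈ T.clusters, ∃ q ∈ T.clusters, IsNontrivialClusterPair p q := by
  obtain ⟨A, hA, B, hB, hAB, hunion⟩ := T.binary univ T.leaves_mem (by simp)
  have hcard : A.card + B.card = 4 := by
    rw [← card_union_of_disjoint hAB, hunion, card_univ, Fintype.card_fin]
  have hA0 := (T.cluster_nonempty A hA).card_pos
  have hB0 := (T.cluster_nonempty B hB).card_pos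
  by_cases h22 : A.card = 2 ∧ B.card = 2
  · exact ⟨A, hA, B, hB, h22.1, Or.inr ⟨h22.2, hAB⟩⟩
  obtain ⟨C, hC, hC3⟩ : ∃ C ∈ T.clusters, C.card = 3 := by
    rcases (by omega : A.card = 3 ∨ B.card = 3) with h | h
    exacts [⟨A, hA, h⟩, ⟨B, hB, h⟩]
  obtain ⟨p, hp, hp2, hpC⟩ := T.exists_card_two_subset_of_card_eq_three hC hC3
  exact ⟨p, hp, C, hC, hp2, Or.inl ⟨hC3, hpC⟩⟩

theorem mem_cl4_of_compatible : ∀ p q : Finset (Fin 4), IsNontrivialClusterPair p q →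
    ∀ D : Finset (Fin 4), D.Nonempty → ClustersCompatible D p → ClustersCompatible D q →
      D ∈ cl4 p q := by
  decide

theorem PTree.exists_clusters_eq_cl4_s16 (T : PTree (Fin 4) univ) :
    ∃ p q, IsNontrivialClusterPair p q ∧ T.clusters = cl4 p q := by
  obtain ⟨p, hp, q, hq, hpq⟩ := T.exists_isNontrivialClusterPair
  refine ⟨p, q, hpq, Subset.antisymm (fun D hD => ?_) ?_⟩
  · exact mem_cl4_of_compatible p q hpq D (T.cluster_nonempty D hD)
      (T.hierarchy D hD p hp) (T.hierarchy D hD q hq)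
  · have hsingleton x := T.singleton_mem x (mem_univ x)
    simp only [cl4, insert_subset_iff, singleton_subset_iff]
    exact ⟨T.leaves_mem, hsingleton 0, hsingleton 1, hsingleton 2, hsingleton 3, hp, hq⟩

theorem cl4_nonempty : ∀ p q : Finset (Fin 4), IsNontrivialClusterPair p q →
    ∀ C ∈ cl4 p q, C.Nonempty := by
  decide

theorem cl4_compatible : ∀ p q : Finset (Fin 4), IsNontrivialClusterPair p q →
    ∀ C ∈ cl4 p q, ∀ D ∈ cl4 p q, ClustersCompatible C D := by
  decide

theorem cl4_binary : ∀ p q : Finset (Fin 4), IsNontrivialClusterPair p q →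
    ∀ C ∈ cl4 p q, 1 < C.card → ∃ A ∈ cl4 p q, ∃ B ∈ cl4 p q, Disjoint A B ∧ A ∪ B = C := by
  decide

noncomputable def tree4 (p q : Finset (Fin 4)) (h : IsNontrivialClusterPair p q) :
    PTree (Fin 4) univ where
  clusters := cl4 p q
  subset_leaves C _ := subset_univ C
  cluster_nonempty := cl4_nonempty p q h
  leaves_mem := by simp [cl4]
  singleton_mem x _ := by fin_cases x <;> simp [cl4]
  hierarchy := cl4_compatible p q h
  binary := cl4_binary p q h

end FourLeaves

section ThreeLeaves

noncomputable def tripleClusters (Y c : Finset (Fin 4)) : Finset (Finset (Fin 4)) :=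
  insert Y (insert c (Y.image ({·})))

def IsCherryOf (c Y : Finset (Fin 4)) : Prop :=
  Y.card = 3 ∧ c.card = 2 ∧ c ⊆ Y

instance : DecidableRel IsCherryOf := fun _ _ =>
  inferInstanceAs (Decidable (_ ∧ _))

theorem tripleClusters_subset : ∀ c Y : Finset (Fin 4), IsCherryOf c Y →
    ∀ C ∈ tripleClusters Y c, C ⊆ Y := by
  decide

theorem tripleClusters_nonempty : ∀ c Y : Finset (Fin 4), IsCherryOf c Y →
    ∀ C ∈ tripleClusters Y c, C.Nonempty := by
  decide

theorem tripleClusters_compatible : ∀ c Y : Finset (Fin 4), IsCherryOf c Y →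
    ∀ C ∈ tripleClusters Y c, ∀ D ∈ tripleClusters Y c, ClustersCompatible C D := by
  decide

theorem tripleClusters_binary : ∀ c Y : Finset (Fin 4), IsCherryOf c Y →
    ∀ C ∈ tripleClusters Y c, 1 < C.card →
      ∃ A ∈ tripleClusters Y c, ∃ B ∈ tripleClusters Y c, Disjoint A B ∧ A ∪ B = C := by
  decide

noncomputable def tree3 (c Y : Finset (Fin 4)) (h : IsCherryOf c Y) : PTree (Fin 4) Y where
  clusters := tripleClusters Y c
  subset_leaves := tripleClusters_subset c Y h
  cluster_nonempty := tripleClusters_nonempty c Y h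
  leaves_mem := mem_insert_self Y _
  singleton_mem x hx := by simp [tripleClusters, hx]
  hierarchy := tripleClusters_compatible c Y h
  binary := tripleClusters_binary c Y h

end ThreeLeaves

/-- The witness `G_m` of the paper, with its leaves `1, 2, 3, 4` renamed `0, 1, 2, 3`. -/
noncomputable def geneTrees : Multiset (PTree (Fin 4) univ) :=
  11 • {tree4 {0, 1} {0, 1, 3} (by decide)} + 10 • {tree4 {0, 2} {0, 2, 3} (by decide)} +
    2 • {tree4 {0, 3} {0, 2, 3} (by decide)} + 3 • {tree4 {1, 2} {0, 1, 2} (by decide)} +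
    3 • {tree4 {0, 3} {1, 2} (by decide)}

noncomputable def speciesTree : PTree (Fin 4) univ :=
  tree4 {0, 1} {0, 1, 2} (by decide)

theorem totalMDC_speciesTree_lt : ∀ p q : Finset (Fin 4), IsNontrivialClusterPair p q →
    cl4 p q ≠ speciesTree.clusters →
    totalMDC geneTrees speciesTree.clusters univ < totalMDC geneTrees (cl4 p q) univ := by
  decide

theorem exists_cherry_totalMDC_lt_restrict : ∀ Y : Finset (Fin 4), Y.card = 3 →
    ∃ c, IsCherryOf c Y ∧ totalMDC geneTrees (tripleClusters Y c) Y <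
      totalMDC geneTrees (restrictClusters speciesTree Y) Y := by
  decide

/-- Non-heredity of MDC: there is a multiset `G_m` of gene trees on 4 taxa and a tree
`S` such that `S` is the unique minimizer of the total MDC score, but for every
3-element subset `Y` the restriction `S|_Y` is not a minimizer of the total MDC score
of the restricted gene trees. -/
theorem stmt16 :
    ∃ (Gm : Multiset (PTree (Fin 4) Finset.univ)) (S : PTree (Fin 4) Finset.univ),
      (∀ S' : PTree (Fin 4) Finset.univ, S' ≠ S →
        (Gm.map (fun T => mdc T S)).sum < (Gm.map (fun T => mdc T S')).sum) ∧
      (∀ Y : Finset (Fin 4), Y ⊂ Finset.univ → Y.card = 3 →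
        ∃ S'' : PTree (Fin 4) Y,
          (Gm.map (fun T => mdcOfClusters (restrictClusters T Y) S''.clusters Y)).sum <
          (Gm.map (fun T =>
            mdcOfClusters (restrictClusters T Y) (restrictClusters S Y) Y)).sum) := by
  refine ⟨geneTrees, speciesTree, fun S' hS' => ?_, fun Y _ hY => ?_⟩
  · obtain ⟨p, q, hpq, hS'cl⟩ := S'.exists_clusters_eq_cl4_s16
    rw [sum_map_mdc_eq_totalMDC, sum_map_mdc_eq_totalMDC, hS'cl]
    refine totalMDC_speciesTree_lt p q hpq fun h => hS' (PTree.clusters_injective_s16 ?_)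
    rw [hS'cl, h]
  · obtain ⟨c, hc, hlt⟩ := exists_cherry_totalMDC_lt_restrict Y hY
    exact ⟨tree3 c Y hc, hlt⟩
end

section
/- Let T and S be rooted binary trees on a common leaf set X of size 4 whose cluster sets are disjoint apart from the trivial clusters (X and singletons), and suppose both T and S are caterpillars whose 3-element clusters are distinct. If additionally the 2-element cluster of T is not contained in the 3-element cluster of S and vice versa, then l(T,S) = 3, the maximum possible value. -/
open scoped Classical

variable {X : Type*} [DecidableEq X]

/-! The 3-cluster `c` of `S` is not a cluster of `T`, and no 2-cluster of `T` lies inside it, so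
every cluster of `T` inside `c` is a singleton. Hence `k_T(c) = 3` and `k_T(b) = 2` for the
2-cluster `b ⊆ c` of `S`; as `c` and `b` are the only nontrivial clusters of `S` on four leaves,
`l(T,S) = 2 + 1`. -/

namespace PTree

variable {L : Finset X} (T : PTree X L)

theorem one_le_card {C : Finset X} (hC : C ∈ T.clusters) : 1 ≤ C.card :=
  Finset.card_pos.mpr (T.cluster_nonempty C hC)

theorem card_le_card_leaves {C : Finset X} (hC : C ∈ T.clusters) : C.card ≤ L.card :=
  Finset.card_le_card (T.subset_leaves C hC)

theorem subset_of_card_le_of_not_disjoint {C D : Finset X} (hC : C ∈ T.clusters)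
    (hD : D ∈ T.clusters) (hCD : C.card ≤ D.card) (h : ¬ Disjoint C D) : C ⊆ D := by
  rcases T.hierarchy C hC D hD with hsub | hsub | hdisj
  · exact hsub
  · exact (Finset.eq_of_subset_of_card_le hsub hCD).ge
  · exact absurd hdisj h

-- Pigeonhole: the two clusters meet inside `A`, hence are nested.
theorem subset_of_card_le_of_card_lt_add {A C D : Finset X} (hC : C ∈ T.clusters)
    (hD : D ∈ T.clusters) (hCA : C ⊆ A) (hDA : D ⊆ A) (hCD : C.card ≤ D.card)
    (hA : A.card < C.card + D.card) : C ⊆ D :=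
  T.subset_of_card_le_of_not_disjoint hC hD hCD <| Finset.not_disjoint_iff_nonempty_inter.mpr <|
    Finset.inter_nonempty_of_card_lt_card_add_card hCA hDA hA

theorem eq_of_card_eq_of_card_lt_add {A C D : Finset X} (hC : C ∈ T.clusters)
    (hD : D ∈ T.clusters) (hCA : C ⊆ A) (hDA : D ⊆ A) (hCD : C.card = D.card)
    (hA : A.card < C.card + D.card) : C = D :=
  Finset.eq_of_subset_of_card_le (T.subset_of_card_le_of_card_lt_add hC hD hCA hDA hCD.le hA)
    hCD.ge

theorem exists_card_two_subset_of_card_three {C : Finset X} (hC : C ∈ T.clusters)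
    (hC3 : C.card = 3) : ∃ B ∈ T.clusters, B.card = 2 ∧ B ⊆ C := by
  obtain ⟨A, hA, B, hB, hAB, rfl⟩ := T.binary C hC (by omega)
  rw [Finset.card_union_of_disjoint hAB] at hC3
  rcases (by have := T.one_le_card hA; have := T.one_le_card hB; omega :
      A.card = 2 ∨ B.card = 2) with hA2 | hB2
  · exact ⟨A, hA, hA2, Finset.subset_union_left⟩
  · exact ⟨B, hB, hB2, Finset.subset_union_right⟩

theorem nontrivial_clusters_eq_pair (hL : L.card = 4) {c b : Finset X}
    (hc : c ∈ T.clusters) (hc3 : c.card = 3) (hb : b ∈ T.clusters) (hb2 : b.card = 2)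
    (hbc : b ⊆ c) : T.clusters.filter (fun C => C ≠ L ∧ C.card ≠ 1) = {c, b} := by
  ext C
  simp only [Finset.mem_filter, Finset.mem_insert, Finset.mem_singleton]
  constructor
  · rintro ⟨hC, hCne, hC1⟩
    have hCsub := T.subset_leaves C hC
    have hcL := T.subset_leaves c hc
    have hC4 : C.card ≠ 4 := fun h4 =>
      hCne (Finset.eq_of_subset_of_card_le hCsub (by omega))
    have := T.one_le_card hC
    have := T.card_le_card_leaves hC
    rcases (by omega : C.card = 2 ∨ C.card = 3) with hC2 | hC3
    · have hCc : C ⊆ c :=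
        T.subset_of_card_le_of_card_lt_add hC hc hCsub hcL (by omega) (by omega)
      exact Or.inr (T.eq_of_card_eq_of_card_lt_add hC hb hCc hbc (by omega) (by omega))
    · exact Or.inl (T.eq_of_card_eq_of_card_lt_add hC hc hCsub hcL (by omega) (by omega))
  · rintro (rfl | rfl)
    · exact ⟨hc, fun h => by rw [h] at hc3; omega, by omega⟩
    · exact ⟨hb, fun h => by rw [h] at hb2; omega, by omega⟩

theorem maxClustersIn_eq_image_singleton {Y : Finset X} (hYL : Y ⊆ L)
    (hY : ∀ D ∈ T.clusters, D ⊆ Y → D.card = 1) :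
    maxClustersIn T.clusters Y = Y.image ({·}) := by
  ext D
  simp only [maxClustersIn, Finset.mem_filter, Finset.mem_image]
  constructor
  · rintro ⟨hD, hDY, -⟩
    obtain ⟨x, rfl⟩ := Finset.card_eq_one.mp (hY D hD hDY)
    exact ⟨x, Finset.singleton_subset_iff.mp hDY, rfl⟩
  · rintro ⟨x, hx, rfl⟩
    refine ⟨T.singleton_mem x (hYL hx), Finset.singleton_subset_iff.mpr hx, ?_⟩
    intro D' hD' hxD' hD'Y
    have := Finset.card_lt_card hxD'
    rw [Finset.card_singleton, hY D' hD' hD'Y] at this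
    exact lt_irrefl 1 this

theorem kOf_eq_card {Y : Finset X} (hYL : Y ⊆ L)
    (hY : ∀ D ∈ T.clusters, D ⊆ Y → D.card = 1) : kOf T.clusters Y = Y.card := by
  rw [kOf, T.maxClustersIn_eq_image_singleton hYL hY,
    Finset.card_image_of_injective _ Finset.singleton_injective]

theorem card_eq_one_of_subset_of_card_three {c : Finset X} (hc3 : c.card = 3)
    (hc : c ∉ T.clusters) (h2 : ∀ A ∈ T.clusters, A.card = 2 → ¬ A ⊆ c)
    {D : Finset X} (hD : D ∈ T.clusters) (hDc : D ⊆ c) : D.card = 1 := by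
  have := T.one_le_card hD
  have := Finset.card_le_card hDc
  rcases (by omega : D.card = 1 ∨ D.card = 2 ∨ D.card = 3) with hD1 | hD2 | hD3
  · exact hD1
  · exact absurd hDc (h2 D hD hD2)
  · exact absurd (Finset.eq_of_subset_of_card_le hDc (by omega) ▸ hD) hc

end PTree

theorem stmt18_general {X : Type*} [DecidableEq X] (L : Finset X) (hL : L.card = 4)
    (T S : PTree X L)
    (hdisj : ∀ C ∈ T.clusters, C ∈ S.clusters → C = L ∨ C.card = 1)
    (cS : Finset X)
    (hcS : cS ∈ S.clusters) (hcS3 : cS.card = 3)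
    (h2T : ∀ A ∈ T.clusters, A.card = 2 → ¬ A ⊆ cS) :
    mdc T S = 3 := by
  have hcST : cS ∉ T.clusters := fun h => by
    rcases hdisj cS h hcS with rfl | h1 <;> omega
  have hsingle : ∀ D ∈ T.clusters, D ⊆ cS → D.card = 1 := fun D hD hDc =>
    T.card_eq_one_of_subset_of_card_three hcS3 hcST h2T hD hDc
  have hcSL := S.subset_leaves cS hcS
  obtain ⟨bS, hbS, hbS2, hbScS⟩ := S.exists_card_two_subset_of_card_three hcS hcS3
  have hcb : cS ≠ bS := fun h => by subst h; omega
  rw [mdc, mdcOfClusters, S.nontrivial_clusters_eq_pair hL hcS hcS3 hbS hbS2 hbScS,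
    Finset.sum_pair hcb, T.kOf_eq_card hcSL hsingle,
    T.kOf_eq_card (hbScS.trans hcSL) fun D hD hDb => hsingle D hD (hDb.trans hbScS), hcS3, hbS2]

/-- If `T` and `S` are caterpillars on a common 4-element leaf set whose cluster sets
share only trivial clusters, with distinct 3-element clusters, and the 2-element
cluster of neither tree is contained in the 3-element cluster of the other, then
`l(T,S) = 3`, the maximum possible value. -/
theorem stmt18 {X : Type*} [DecidableEq X] (L : Finset X) (hL : L.card = 4)
    (T S : PTree X L)
    (hdisj : ∀ C ∈ T.clusters, C ∈ S.clusters → C = L ∨ C.card = 1)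
    (cT cS : Finset X)
    (hcT : cT ∈ T.clusters) (hcT3 : cT.card = 3)
    (hcS : cS ∈ S.clusters) (hcS3 : cS.card = 3)
    (hne : cT ≠ cS)
    (h2T : ∀ A ∈ T.clusters, A.card = 2 → ¬ A ⊆ cS)
    (h2S : ∀ B ∈ S.clusters, B.card = 2 → ¬ B ⊆ cT) :
    mdc T S = 3 :=
  stmt18_general L hL T S hdisj cS hcS hcS3 h2T
end
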